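/- arXiv:1312.6049 — 7 statements merged into one kernel-verified Lean document; each statement's English description precedes it below -/
import Mathlib

section
/- Let α ≠ 0 be a real number. A triple of real numbers (λ, μ, ν) satisfies the system of three equations: −2λ + (α/2)S² − αλS − αQ + αλ² = 0, −2μ + (α/2)S² − αμS − αQ + αμ² = 0, and −2ν + (α/2)S² − ανS − αQ + αν² = 0, where S = λ + μ + ν and Q = λ² + μ² + ν², if and only if (λ, μ, ν) is a permutation of one of the four triples (0, 0, 0), (−4/α, −4/α, −4/α), (−2/α, −2/α, 0), (−4/α, −2/α, −2/α). -/
/-!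
In terms of the other two eigenvalues, the equation of `λ` reads `α (λ² + (μ - ν)²) + 4 λ = 0`.
Subtracting two of the equations gives `(λ - μ) (α ν + 2) = 0` and its permutations, so either
all three eigenvalues coincide or two of them equal `-2/α`; in both cases the remaining one is a
root of `α x² + 4 x`. Conversely, the system only depends on the multiset of eigenvalues, so it
suffices to check the four listed triples.
-/

/-- The left-hand side of the equation of the eigenvalue `x`, where `S` and `Q` are the trace and
the squared norm of the Ricci tensor. -/
noncomputable def rg2Residual (α S Q x : ℝ) : ℝ := -2*x + α/2*S^2 - α*x*S - α*Q + α*x^2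

def IsRG2Fixed (α : ℝ) (L : List ℝ) : Prop :=
  ∀ x ∈ L, rg2Residual α L.sum (L.map (· ^ 2)).sum x = 0

noncomputable def rg2Solutions (α : ℝ) : List (List ℝ) :=
  [[0, 0, 0], [-4/α, -4/α, -4/α], [-2/α, -2/α, 0], [-4/α, -2/α, -2/α]]

theorem IsRG2Fixed.of_perm {α : ℝ} {L L' : List ℝ} (hL : IsRG2Fixed α L) (h : L.Perm L') :
    IsRG2Fixed α L' := by
  intro x hx
  rw [← h.sum_eq, ← (h.map _).sum_eq]
  exact hL x (h.mem_iff.mpr hx)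

theorem isRG2Fixed_triple_iff (α l m n : ℝ) :
    IsRG2Fixed α [l, m, n] ↔
      rg2Residual α (l + m + n) (l^2 + m^2 + n^2) l = 0 ∧
      rg2Residual α (l + m + n) (l^2 + m^2 + n^2) m = 0 ∧
      rg2Residual α (l + m + n) (l^2 + m^2 + n^2) n = 0 := by
  simp [IsRG2Fixed, add_assoc]

theorem rg2Residual_eq_of_triple {α S Q x y z : ℝ} (hS : S = x + y + z)
    (hQ : Q = x^2 + y^2 + z^2) :
    rg2Residual α S Q x = -(α * (x^2 + (y - z)^2) + 4 * x) / 2 := by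
  subst hS hQ; unfold rg2Residual; ring

theorem isRG2Fixed_of_mem_rg2Solutions {α : ℝ} (hα : α ≠ 0) {L : List ℝ}
    (hL : L ∈ rg2Solutions α) : IsRG2Fixed α L := by
  simp only [rg2Solutions, List.mem_cons, List.not_mem_nil, or_false] at hL
  rcases hL with rfl | rfl | rfl | rfl <;>
    refine (isRG2Fixed_triple_iff α _ _ _).mpr ⟨?_, ?_, ?_⟩ <;>
    · unfold rg2Residual; field_simp; ring

theorem eq_zero_or_eq_neg_four_div {α x : ℝ} (hα : α ≠ 0) (h : α * x^2 + 4 * x = 0) :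
    x = 0 ∨ x = -4/α := by
  have : x * (α * x + 4) = 0 := by linear_combination h
  rcases mul_eq_zero.mp this with h | h
  · exact Or.inl h
  · exact Or.inr (by rw [eq_div_iff hα]; linarith)

theorem exists_mem_rg2Solutions_perm_of_perm_pair {α a x : ℝ} (hα : α ≠ 0) (ha : α * a = -2)
    (hx : α * x^2 + 4 * x = 0) {L : List ℝ} (hL : L.Perm [a, a, x]) :
    ∃ L' ∈ rg2Solutions α, L.Perm L' := by
  obtain rfl : a = -2/α := by rw [eq_div_iff hα]; linear_combination ha
  rcases eq_zero_or_eq_neg_four_div hα hx with rfl | rfl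
  · exact ⟨_, by simp [rg2Solutions], hL⟩
  · exact ⟨_, by simp [rg2Solutions],
      hL.trans (List.perm_append_comm (l₁ := [_, _]) (l₂ := [_]))⟩

theorem exists_mem_rg2Solutions_perm {α l m n : ℝ} (hα : α ≠ 0)
    (hl : α * (l^2 + (m - n)^2) + 4 * l = 0) (hm : α * (m^2 + (l - n)^2) + 4 * m = 0)
    (hn : α * (n^2 + (l - m)^2) + 4 * n = 0) : ∃ L ∈ rg2Solutions α, [l, m, n].Perm L := by
  have hlm : (l - m) * (α * n + 2) = 0 := by linear_combination (hl - hm) / 2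
  have hmn : (m - n) * (α * l + 2) = 0 := by linear_combination (hm - hn) / 2
  have hln : (l - n) * (α * m + 2) = 0 := by linear_combination (hl - hn) / 2
  rcases mul_eq_zero.mp hlm with h | hn'
  · obtain rfl : l = m := sub_eq_zero.mp h
    rcases mul_eq_zero.mp hmn with h | hl'
    · obtain rfl : l = n := sub_eq_zero.mp h
      refine ⟨[l, l, l], ?_, .refl _⟩
      rcases eq_zero_or_eq_neg_four_div (x := l) hα (by linear_combination hl) with rfl | rfl <;>
        simp [rg2Solutions]
    · exact exists_mem_rg2Solutions_perm_of_perm_pair hα (by linear_combination hl')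
        (by linear_combination hn) (.refl _)
  · rcases mul_eq_zero.mp hln with h | hm'
    · obtain rfl : l = n := sub_eq_zero.mp h
      exact exists_mem_rg2Solutions_perm_of_perm_pair hα (by linear_combination hn')
        (by linear_combination hm) (.cons l (.swap _ _ _))
    · obtain rfl : m = n := mul_left_cancel₀ hα (by linear_combination hm' - hn')
      exact exists_mem_rg2Solutions_perm_of_perm_pair hα (by linear_combination hn')
        (by linear_combination hl) (List.perm_append_comm (l₁ := [l]) (l₂ := [m, m]))

theorem isRG2Fixed_triple_iff_exists_perm {α : ℝ} (hα : α ≠ 0) {l m n : ℝ} :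
    IsRG2Fixed α [l, m, n] ↔ ∃ L ∈ rg2Solutions α, [l, m, n].Perm L := by
  refine ⟨fun h ↦ ?_, fun ⟨L, hL, h⟩ ↦ (isRG2Fixed_of_mem_rg2Solutions hα hL).of_perm h.symm⟩
  obtain ⟨hl, hm, hn⟩ := (isRG2Fixed_triple_iff α l m n).mp h
  rw [rg2Residual_eq_of_triple rfl rfl] at hl
  rw [rg2Residual_eq_of_triple (y := l) (z := n) (by ring) (by ring)] at hm
  rw [rg2Residual_eq_of_triple (y := l) (z := m) (by ring) (by ring)] at hn
  exact exists_mem_rg2Solutions_perm hα (by linarith) (by linarith) (by linarith)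

/-- Fixed point condition for the RG-2 flow in dimension 3, written in terms of the
eigenvalues `l, m, n` (λ, μ, ν) of the Ricci tensor: the algebraic system holds iff
(λ, μ, ν) is a permutation of one of four explicit triples. -/
theorem rg2_fixed_point_eigenvalues (α l m n : ℝ) (hα : α ≠ 0) :
    (-2*l + α/2*(l + m + n)^2 - α*l*(l + m + n) - α*(l^2 + m^2 + n^2) + α*l^2 = 0 ∧
     -2*m + α/2*(l + m + n)^2 - α*m*(l + m + n) - α*(l^2 + m^2 + n^2) + α*m^2 = 0 ∧
     -2*n + α/2*(l + m + n)^2 - α*n*(l + m + n) - α*(l^2 + m^2 + n^2) + α*n^2 = 0) ↔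
    (([l, m, n] : List ℝ).Perm [0, 0, 0] ∨
     ([l, m, n] : List ℝ).Perm [-4/α, -4/α, -4/α] ∨
     ([l, m, n] : List ℝ).Perm [-2/α, -2/α, 0] ∨
     ([l, m, n] : List ℝ).Perm [-4/α, -2/α, -2/α]) :=
  (isRG2Fixed_triple_iff α l m n).symm.trans <|
    (isRG2Fixed_triple_iff_exists_perm hα).trans <| by simp [rg2Solutions]
end

section
/- Let n ≥ 2 be an integer, α > 0 and K real constants with K ≠ 0 and 2 + αK ≠ 0. Suppose φ : [0, T) → ℝ is differentiable with φ(0) = 1, and for all t ∈ [0, T) one has φ(t) > 0, 2φ(t) + αK ≠ 0, and φ'(t) = −2K(n−1) − (α/φ(t))·K²(n−1). Then for all t ∈ [0, T): φ(t) = −2K(n−1)·t + 1 + (αK/2)·ln|(2φ(t) + αK)/(2 + αK)|. -/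
/-! With `c = -2K(n-1)` and `a = αK` the equation reads `φ' = c (2φ + a) / (2φ)`, whose
variables separate: `Ψ(y) = y - (a/2) log |2y + a|` has `Ψ'(y) = 2y / (2y + a)`, so
`(Ψ ∘ φ)' = c` and `Ψ(φ t) = Ψ(1) + c t`, which is the stated formula. (`Real.log x` is
`log |x|`, so no absolute value is needed in `Ψ`.) -/

open Set

theorem eq_add_mul_sub_of_hasDerivAt_const {g : ℝ → ℝ} {a b c : ℝ}
    (hg : ∀ x ∈ Ico a b, HasDerivAt g c x) : ∀ t ∈ Ico a b, g t = g a + c * (t - a) := by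
  intro t ht
  have hsub : Icc a t ⊆ Ico a b := fun x hx => ⟨hx.1, hx.2.trans_lt ht.2⟩
  have hline : ∀ x, HasDerivAt (fun x => g a + c * (x - a)) c x := fun x => by
    simpa using ((hasDerivAt_id x).sub_const a).const_mul c |>.const_add (g a)
  refine eq_of_has_deriv_right_eq (f' := fun _ => c)
    (fun x hx => (hg x (hsub (Ico_subset_Icc_self hx))).hasDerivWithinAt)
    (fun x _ => (hline x).hasDerivWithinAt)
    (fun x hx => (hg x (hsub hx)).continuousAt.continuousWithinAt)
    (fun x _ => (hline x).continuousAt.continuousWithinAt) (by simp) t ⟨ht.1, le_rfl⟩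

theorem hasDerivAt_sub_mul_log_two_mul_add {a y : ℝ} (hy : 2 * y + a ≠ 0) :
    HasDerivAt (fun y => y - a / 2 * Real.log (2 * y + a)) (2 * y / (2 * y + a)) y := by
  have hlog : HasDerivAt (fun y => Real.log (2 * y + a)) (2 / (2 * y + a)) y := by
    simpa using (((hasDerivAt_id y).const_mul 2).add_const a).log hy
  refine ((hasDerivAt_id y).sub (hlog.const_mul (a / 2))).congr_deriv ?_
  field_simp
  ring

theorem sub_mul_log_comp_eq_of_hasDerivAt {φ : ℝ → ℝ} {a c T : ℝ}
    (hφ : ∀ t ∈ Ico 0 T, φ t ≠ 0) (hne : ∀ t ∈ Ico 0 T, 2 * φ t + a ≠ 0)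
    (hderiv : ∀ t ∈ Ico 0 T, HasDerivAt φ (c * (2 * φ t + a) / (2 * φ t)) t) :
    ∀ t ∈ Ico 0 T, φ t - a / 2 * Real.log (2 * φ t + a)
      = φ 0 - a / 2 * Real.log (2 * φ 0 + a) + c * t := by
  have hcomp : ∀ t ∈ Ico 0 T,
      HasDerivAt (fun t => φ t - a / 2 * Real.log (2 * φ t + a)) c t := fun t ht => by
    refine ((hasDerivAt_sub_mul_log_two_mul_add (hne t ht)).comp t (hderiv t ht)).congr_deriv ?_
    field_simp [hφ t ht, hne t ht]
  intro t ht
  simpa using eq_add_mul_sub_of_hasDerivAt_const hcomp t ht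

theorem rg2_constant_curvature_implicit_solution_general
    (n : ℕ) (α K T : ℝ)
    (h2 : 2 + α * K ≠ 0) (φ : ℝ → ℝ) (hφ0 : φ 0 = 1)
    (hpos : ∀ t ∈ Set.Ico (0 : ℝ) T, 0 < φ t)
    (hne : ∀ t ∈ Set.Ico (0 : ℝ) T, 2 * φ t + α * K ≠ 0)
    (hderiv : ∀ t ∈ Set.Ico (0 : ℝ) T,
      HasDerivAt φ (-2 * K * ((n : ℝ) - 1) - α / φ t * K ^ 2 * ((n : ℝ) - 1)) t) :
    ∀ t ∈ Set.Ico (0 : ℝ) T,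
      φ t = -2 * K * ((n : ℝ) - 1) * t + 1 +
        α * K / 2 * Real.log |(2 * φ t + α * K) / (2 + α * K)| := by
  have hφ : ∀ t ∈ Ico 0 T, φ t ≠ 0 := fun t ht => (hpos t ht).ne'
  have hsep : ∀ t ∈ Ico 0 T, HasDerivAt φ
      (-2 * K * ((n : ℝ) - 1) * (2 * φ t + α * K) / (2 * φ t)) t := fun t ht => by
    convert hderiv t ht using 1
    field_simp [hφ t ht]
    ring
  intro t ht
  have hΨ := sub_mul_log_comp_eq_of_hasDerivAt hφ hne hsep t ht
  rw [hφ0, mul_one] at hΨ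
  rw [Real.log_abs, Real.log_div (hne t ht) h2]
  linarith

/-- The implicit solution formula (via the Lambert W relation) for the RG-2
constant-curvature conformal factor ODE
`φ'(t) = −2K(n−1) − (α/φ(t))·K²(n−1)` with `φ(0) = 1`. -/
theorem rg2_constant_curvature_implicit_solution
    (n : ℕ) (hn : 2 ≤ n) (α K T : ℝ) (hα : 0 < α) (hK : K ≠ 0)
    (h2 : 2 + α * K ≠ 0) (φ : ℝ → ℝ) (hφ0 : φ 0 = 1)
    (hpos : ∀ t ∈ Set.Ico (0 : ℝ) T, 0 < φ t)
    (hne : ∀ t ∈ Set.Ico (0 : ℝ) T, 2 * φ t + α * K ≠ 0)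
    (hderiv : ∀ t ∈ Set.Ico (0 : ℝ) T,
      HasDerivAt φ (-2 * K * ((n : ℝ) - 1) - α / φ t * K ^ 2 * ((n : ℝ) - 1)) t) :
    ∀ t ∈ Set.Ico (0 : ℝ) T,
      φ t = -2 * K * ((n : ℝ) - 1) * t + 1 +
        α * K / 2 * Real.log |(2 * φ t + α * K) / (2 + α * K)| :=
  rg2_constant_curvature_implicit_solution_general n α K T h2 φ hφ0 hpos hne hderiv
end

section
/- Let n ≥ 2 be an integer, α > 0 and K real constants with K ≠ 0 and 2 + αK ≠ 0, and let T > 0 be finite. Suppose φ : [0, T) → ℝ is differentiable with φ(0) = 1, for all t ∈ [0, T) one has φ(t) > 0, 2φ(t) + αK ≠ 0, and φ'(t) = −2K(n−1) − (α/φ(t))·K²(n−1), and suppose φ(t) → 0 as t → T⁻. Then T = 1/(2K(n−1)) + (α/(4(n−1)))·ln|αK/(2 + αK)|. -/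
/-!
Along a solution, `t + φ/(2K(n-1)) - α/(4(n-1)) · log(2φ + αK)` is a first integral of the
ODE, since `φ · φ' = -K(n-1)(2φ + αK)`. Comparing its value at `t = 0` (where `φ = 1`) with its
limit as `t → T⁻` (where `φ → 0`) gives `T`.
-/

open Set Filter Topology

theorem eq_of_hasDerivAt_zero_of_tendsto_nhdsLT {E : Type*} [NormedAddCommGroup E]
    [NormedSpace ℝ E] {f : ℝ → E} {a b : ℝ} {L : E} (hab : a < b)
    (hf : ∀ t ∈ Ico a b, HasDerivAt f 0 t) (hlim : Tendsto f (𝓝[<] b) (𝓝 L)) : f a = L := by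
  have hconst : ∀ s ∈ Ico a b, f s = f a := fun s hs =>
    constant_of_has_deriv_right_zero
      (fun x hx => (hf x ⟨hx.1, hx.2.trans_lt hs.2⟩).continuousAt.continuousWithinAt)
      (fun x hx => (hf x ⟨hx.1, hx.2.trans hs.2⟩).hasDerivWithinAt) s ⟨hs.1, le_rfl⟩
  have hev : f =ᶠ[𝓝[<] b] fun _ => f a := by
    filter_upwards [Ioo_mem_nhdsLT hab] with t ht using hconst t ⟨ht.1.le, ht.2⟩
  exact tendsto_nhds_unique (tendsto_const_nhds.congr' hev.symm) hlim

namespace RG2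

noncomputable def firstIntegral (c α K : ℝ) (φ : ℝ → ℝ) (t : ℝ) : ℝ :=
  t + φ t / (2 * K * c) - α / (4 * c) * Real.log (2 * φ t + α * K)

variable {c α K : ℝ} {φ : ℝ → ℝ}

theorem hasDerivAt_firstIntegral {t : ℝ} (hc : c ≠ 0) (hK : K ≠ 0) (hφ : φ t ≠ 0)
    (hne : 2 * φ t + α * K ≠ 0)
    (hderiv : HasDerivAt φ (-2 * K * c - α / φ t * K ^ 2 * c) t) :
    HasDerivAt (firstIntegral c α K φ) 0 t := by
  have hlog := ((hderiv.const_mul 2).add_const (α * K)).log hne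
  refine (((hasDerivAt_id t).add (hderiv.div_const (2 * K * c))).sub
    (hlog.const_mul (α / (4 * c)))).congr_deriv ?_
  have hne' : 2 * φ t + K * α ≠ 0 := by rwa [mul_comm K]
  field_simp
  ring

theorem tendsto_firstIntegral {l : Filter ℝ} {T : ℝ} (hαK : α * K ≠ 0) (hl : l ≤ 𝓝 T)
    (hφ : Tendsto φ l (𝓝 0)) :
    Tendsto (firstIntegral c α K φ) l (𝓝 (T - α / (4 * c) * Real.log (α * K))) := by
  have hlog : Tendsto (fun t => Real.log (2 * φ t + α * K)) l (𝓝 (Real.log (α * K))) := by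
    refine (Real.continuousAt_log hαK).tendsto.comp ?_
    simpa using (hφ.const_mul 2).add_const (α * K)
  unfold firstIntegral
  simpa using ((tendsto_id.mono_left hl).add (hφ.div_const (2 * K * c))).sub
    (hlog.const_mul (α / (4 * c)))

theorem firstIntegral_zero (hφ0 : φ 0 = 1) :
    firstIntegral c α K φ 0 = 1 / (2 * K * c) - α / (4 * c) * Real.log (2 + α * K) := by
  simp [firstIntegral, hφ0]

end RG2

/-- The extinction time of a constant curvature RG-2 solution: if the conformal
factor `φ` solving `φ'(t) = −2K(n−1) − (α/φ(t))·K²(n−1)`, `φ(0) = 1`, tends to `0`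
as `t → T⁻`, then `T = 1/(2K(n−1)) + (α/(4(n−1)))·ln|αK/(2+αK)|`. -/
theorem rg2_constant_curvature_extinction_time
    (n : ℕ) (hn : 2 ≤ n) (α K T : ℝ) (hα : 0 < α) (hK : K ≠ 0)
    (h2 : 2 + α * K ≠ 0) (hT : 0 < T) (φ : ℝ → ℝ) (hφ0 : φ 0 = 1)
    (hpos : ∀ t ∈ Set.Ico (0 : ℝ) T, 0 < φ t)
    (hne : ∀ t ∈ Set.Ico (0 : ℝ) T, 2 * φ t + α * K ≠ 0)
    (hderiv : ∀ t ∈ Set.Ico (0 : ℝ) T,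
      HasDerivAt φ (-2 * K * ((n : ℝ) - 1) - α / φ t * K ^ 2 * ((n : ℝ) - 1)) t)
    (hlim : Filter.Tendsto φ (nhdsWithin T (Set.Iio T)) (nhds 0)) :
    T = 1 / (2 * K * ((n : ℝ) - 1)) +
      α / (4 * ((n : ℝ) - 1)) * Real.log |α * K / (2 + α * K)| := by
  have hc : (n : ℝ) - 1 ≠ 0 := by
    have : (2 : ℝ) ≤ n := by exact_mod_cast hn
    linarith
  have hαK : α * K ≠ 0 := mul_ne_zero hα.ne' hK
  have hconserved := eq_of_hasDerivAt_zero_of_tendsto_nhdsLT hT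
    (fun t ht => RG2.hasDerivAt_firstIntegral hc hK (hpos t ht).ne' (hne t ht) (hderiv t ht))
    (RG2.tendsto_firstIntegral hαK nhdsWithin_le_nhds hlim)
  rw [RG2.firstIntegral_zero hφ0] at hconserved
  rw [Real.log_abs, Real.log_div hαK h2]
  linarith
end

section
/- Let n ≥ 2 be an integer and let α > 0 and K > 0 be real numbers. Then the number T := 1/(2K(n−1)) + (α/(4(n−1)))·ln(αK/(2 + αK)) satisfies 0 < T < 1/(2K(n−1)). That is, the extinction time of a constant positive curvature RG-2 solution is positive, and is strictly less than the extinction time 1/(2K(n−1)) of the corresponding Ricci flow solution. -/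
/-! Writing `x = αK` and `c = n - 1`, the time is `T = (1 + (x/2)·log(x/(2+x))) / (2Kc)`.
With `y = 2/x` the bracket is `1 - log(1+y)/y`, which lies in `(0, 1)` because
`0 < log(1+y) < y` for `y > 0`. -/

namespace Real

lemma log_one_add_div_self_mem_Ioo {y : ℝ} (hy : 0 < y) :
    Real.log (1 + y) / y ∈ Set.Ioo 0 1 := by
  have hpos : 0 < Real.log (1 + y) := Real.log_pos (by linarith)
  have hlt : Real.log (1 + y) < y := by
    have := Real.log_lt_sub_one_of_pos (by linarith : 0 < 1 + y) (by linarith : 1 + y ≠ 1)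
    linarith
  exact ⟨div_pos hpos hy, (div_lt_one hy).mpr hlt⟩

lemma one_add_half_mul_log_div_two_add_mem_Ioo {x : ℝ} (hx : 0 < x) :
    1 + x / 2 * Real.log (x / (2 + x)) ∈ Set.Ioo 0 1 := by
  have hy : 0 < 2 / x := div_pos two_pos hx
  have hrewrite : 1 + x / 2 * Real.log (x / (2 + x)) = 1 - Real.log (1 + 2 / x) / (2 / x) := by
    have hinv : x / (2 + x) = (1 + 2 / x)⁻¹ := by
      field_simp
      ring
    rw [hinv, Real.log_inv]
    field_simp
    ring
  obtain ⟨hlow, hhigh⟩ := log_one_add_div_self_mem_Ioo hy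
  rw [hrewrite]
  constructor <;> linarith

end Real

/-- For `K > 0` the RG-2 extinction time
`T = 1/(2K(n−1)) + (α/(4(n−1)))·ln(αK/(2+αK))` is positive and strictly smaller
than the Ricci flow extinction time `1/(2K(n−1))`. -/
theorem rg2_extinction_time_positive_and_less_than_ricci
    (n : ℕ) (hn : 2 ≤ n) (α K : ℝ) (hα : 0 < α) (hK : 0 < K) :
    0 < 1 / (2 * K * ((n : ℝ) - 1)) +
        α / (4 * ((n : ℝ) - 1)) * Real.log (α * K / (2 + α * K)) ∧
    1 / (2 * K * ((n : ℝ) - 1)) +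
        α / (4 * ((n : ℝ) - 1)) * Real.log (α * K / (2 + α * K)) <
      1 / (2 * K * ((n : ℝ) - 1)) := by
  have hc : (0 : ℝ) < (n : ℝ) - 1 := by
    have : (2 : ℝ) ≤ n := by exact_mod_cast hn
    linarith
  have hricci : 0 < 1 / (2 * K * ((n : ℝ) - 1)) := by positivity
  have hfactor : 1 / (2 * K * ((n : ℝ) - 1)) +
      α / (4 * ((n : ℝ) - 1)) * Real.log (α * K / (2 + α * K)) =
      1 / (2 * K * ((n : ℝ) - 1)) * (1 + α * K / 2 * Real.log (α * K / (2 + α * K))) := by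
    field_simp
    ring
  obtain ⟨hlow, hhigh⟩ := Real.one_add_half_mul_log_div_two_add_mem_Ioo (mul_pos hα hK)
  rw [hfactor]
  exact ⟨mul_pos hricci hlow, mul_lt_of_lt_one_right hricci hhigh⟩
end

section
/- Let n ≥ 2 be an integer, α > 0 and K < 0 real constants with 2 + αK > 0. Suppose φ : [0, T) → ℝ is differentiable with φ(0) = 1, and for all t ∈ [0, T) one has φ(t) > 0 and φ'(t) = −2K(n−1) − (α/φ(t))·K²(n−1). Then for all t ∈ [0, T): φ(t) ≥ 1, φ'(t) ≥ −K(n−1)(2 + αK) > 0, and hence φ(t) ≥ 1 − K(n−1)(2 + αK)·t; in particular φ is strictly increasing. -/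
/-!
At the level `φ = 1` the right-hand side of the ODE equals `c = -K(n-1)(2+αK) > 0`, so `φ`
cannot cross below `1`; and since the right-hand side increases with `φ`, it is at least `c`
wherever `φ ≥ 1`. The mean value inequality then gives `φ(s) - φ(r) ≥ c (s - r)` for `r ≤ s`,
which is both the linear lower bound and strict monotonicity.
-/

open Set

/-- The right-hand side of the RG-2 conformal-factor ODE, as a function of `x = φ(t)`. -/
noncomputable def rg2Rate (n : ℕ) (α K x : ℝ) : ℝ :=
  -2 * K * ((n : ℝ) - 1) - α / x * K ^ 2 * ((n : ℝ) - 1)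

theorem rg2Rate_one (n : ℕ) (α K : ℝ) :
    rg2Rate n α K 1 = -K * ((n : ℝ) - 1) * (2 + α * K) := by
  unfold rg2Rate; ring

theorem rg2Rate_one_le {n : ℕ} (hn : 1 ≤ n) {α : ℝ} (hα : 0 ≤ α) (K : ℝ) {x : ℝ} (hx : 1 ≤ x) :
    rg2Rate n α K 1 ≤ rg2Rate n α K x := by
  have hn1 : (0 : ℝ) ≤ (n : ℝ) - 1 := by
    rw [sub_nonneg]; exact_mod_cast hn
  have : α / x * K ^ 2 * ((n : ℝ) - 1) ≤ α / 1 * K ^ 2 * ((n : ℝ) - 1) := by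
    gcongr
  unfold rg2Rate; linarith

theorem rg2_growth_const_pos {n : ℕ} (hn : 2 ≤ n) {α K : ℝ} (hK : K < 0) (h2 : 0 < 2 + α * K) :
    0 < -K * ((n : ℝ) - 1) * (2 + α * K) := by
  have hn1 : (0 : ℝ) < (n : ℝ) - 1 := by
    rw [sub_pos]; exact_mod_cast hn
  have : 0 < -K := neg_pos.mpr hK
  positivity

theorem le_of_hasDerivAt_pos_of_eq {φ φ' : ℝ → ℝ} {a T y : ℝ} (ha : y ≤ φ a)
    (hφ : ∀ t ∈ Ico a T, HasDerivAt φ (φ' t) t) (hlevel : ∀ t ∈ Ico a T, φ t = y → 0 < φ' t) :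
    ∀ t ∈ Ico a T, y ≤ φ t := by
  intro t ht
  have hsub : Icc a t ⊆ Ico a T := Icc_subset_Ico_right ht.2
  refine image_le_of_deriv_right_lt_deriv_boundary' (f' := fun _ => 0) continuousOn_const
    (fun _ _ => hasDerivWithinAt_const _ _ _) ha
    (fun s hs => (hφ s (hsub hs)).continuousAt.continuousWithinAt)
    (fun s hs => (hφ s (hsub (Ico_subset_Icc_self hs))).hasDerivWithinAt)
    (fun s hs hs_eq => hlevel s (hsub (Ico_subset_Icc_self hs)) hs_eq.symm) ⟨ht.1, le_rfl⟩

theorem mul_sub_le_sub_of_le_hasDerivAt {φ φ' : ℝ → ℝ} {a T c : ℝ}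
    (hφ : ∀ t ∈ Ico a T, HasDerivAt φ (φ' t) t) (hc : ∀ t ∈ Ico a T, c ≤ φ' t) :
    ∀ r ∈ Ico a T, ∀ s ∈ Ico a T, r ≤ s → c * (s - r) ≤ φ s - φ r := by
  have hint : interior (Ico a T) ⊆ Ico a T := interior_subset
  refine (convex_Ico a T).mul_sub_le_image_sub_of_le_deriv
    (fun t ht => (hφ t ht).continuousAt.continuousWithinAt)
    (fun t ht => (hφ t (hint ht)).differentiableAt.differentiableWithinAt) (fun t ht => ?_)
  rw [(hφ t (hint ht)).deriv]
  exact hc t (hint ht)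

theorem rg2_small_negative_curvature_expands_general
    (n : ℕ) (hn : 2 ≤ n) (α K T : ℝ) (hα : 0 < α) (hK : K < 0)
    (h2 : 0 < 2 + α * K) (φ : ℝ → ℝ) (hφ0 : φ 0 = 1)
    (hderiv : ∀ t ∈ Set.Ico (0 : ℝ) T,
      HasDerivAt φ (-2 * K * ((n : ℝ) - 1) - α / φ t * K ^ 2 * ((n : ℝ) - 1)) t) :
    (∀ t ∈ Set.Ico (0 : ℝ) T,
      1 ≤ φ t ∧
      -K * ((n : ℝ) - 1) * (2 + α * K) ≤ deriv φ t ∧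
      1 - K * ((n : ℝ) - 1) * (2 + α * K) * t ≤ φ t) ∧
    0 < -K * ((n : ℝ) - 1) * (2 + α * K) ∧
    StrictMonoOn φ (Set.Ico (0 : ℝ) T) := by
  have hc := rg2_growth_const_pos hn hK h2
  have hderiv' : ∀ t ∈ Ico (0 : ℝ) T, HasDerivAt φ (rg2Rate n α K (φ t)) t := hderiv
  have hge : ∀ t ∈ Ico (0 : ℝ) T, 1 ≤ φ t :=
    le_of_hasDerivAt_pos_of_eq hφ0.ge hderiv' fun t _ ht => by rwa [ht, rg2Rate_one]
  have hrate : ∀ t ∈ Ico (0 : ℝ) T, -K * ((n : ℝ) - 1) * (2 + α * K) ≤ rg2Rate n α K (φ t) :=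
    fun t ht => rg2Rate_one n α K ▸ rg2Rate_one_le (by omega) hα.le K (hge t ht)
  have hgrowth := mul_sub_le_sub_of_le_hasDerivAt hderiv' hrate
  refine ⟨fun t ht => ⟨hge t ht, (hderiv' t ht).deriv ▸ hrate t ht, ?_⟩, hc, ?_⟩
  · have := hgrowth 0 ⟨le_rfl, ht.1.trans_lt ht.2⟩ t ht ht.1
    rw [hφ0] at this; linarith
  · intro r hr s hs hrs
    have := hgrowth r hr s hs hrs.le
    linarith [mul_pos hc (sub_pos.mpr hrs)]

/-- For `K < 0` with `2 + αK > 0` (small negative curvature), a positive solution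
of the RG-2 conformal factor ODE expands: `φ ≥ 1`, `φ' ≥ −K(n−1)(2+αK) > 0`, hence
`φ(t) ≥ 1 − K(n−1)(2+αK)t`, and `φ` is strictly increasing. -/
theorem rg2_small_negative_curvature_expands
    (n : ℕ) (hn : 2 ≤ n) (α K T : ℝ) (hα : 0 < α) (hK : K < 0)
    (h2 : 0 < 2 + α * K) (φ : ℝ → ℝ) (hφ0 : φ 0 = 1)
    (hpos : ∀ t ∈ Set.Ico (0 : ℝ) T, 0 < φ t)
    (hderiv : ∀ t ∈ Set.Ico (0 : ℝ) T,
      HasDerivAt φ (-2 * K * ((n : ℝ) - 1) - α / φ t * K ^ 2 * ((n : ℝ) - 1)) t) :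
    (∀ t ∈ Set.Ico (0 : ℝ) T,
      1 ≤ φ t ∧
      -K * ((n : ℝ) - 1) * (2 + α * K) ≤ deriv φ t ∧
      1 - K * ((n : ℝ) - 1) * (2 + α * K) * t ≤ φ t) ∧
    0 < -K * ((n : ℝ) - 1) * (2 + α * K) ∧
    StrictMonoOn φ (Set.Ico (0 : ℝ) T) :=
  rg2_small_negative_curvature_expands_general n hn α K T hα hK h2 φ hφ0 hderiv
end

section
/- Let α > 0 and c > 0 be real constants, and let φ : [0, S) → ℝ (with 0 < S ≤ ∞) be twice continuously differentiable with φ(0) = 0, φ'(0) = 1, 1 + 2cα·φ'(s) ≥ 0 for all s, and φ''(s) = (φ(s)/α)·(1 − √(1 + 2cα·φ'(s))) for all s ∈ [0, S). Then for all s ∈ (0, S): φ(s) > 0 and 0 < φ'(s) ≤ 1, and φ' is strictly decreasing on (0, S). -/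
/-!
Let `T` be the first point where `φ'` vanishes. On `[0, T]` the profile `φ` is increasing, so
`0 ≤ φ ≤ φ(T)`, and `√(1 + 2y) ≤ 1 + y` turns the equation into
`φ'' ≥ -c φ φ' ≥ -c φ(T) φ'`. Hence `exp (c φ(T) s) φ'(s)` is nondecreasing on `[0, T]`,
contradicting `φ'(0) = 1` and `φ'(T) = 0`. So `φ' > 0`, then `φ > 0`, and the right-hand side
of the equation is negative.
-/

open Set

noncomputable def rg2Rhs (α c x p : ℝ) : ℝ :=
  x / α * (1 - √(1 + 2 * c * α * p))

section Rhs

variable {α c x p : ℝ}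

lemma rg2Rhs_neg (hα : 0 < α) (hc : 0 < c) (hx : 0 < x) (hp : 0 < p) :
    rg2Rhs α c x p < 0 := by
  have : 1 < √(1 + 2 * c * α * p) :=
    Real.lt_sqrt_of_sq_lt (by have := mul_pos (mul_pos hc hα) hp; linarith)
  exact mul_neg_of_pos_of_neg (div_pos hx hα) (by linarith)

lemma neg_mul_le_rg2Rhs (hα : 0 < α) (hx : 0 ≤ x) (hp : 0 ≤ 1 + 2 * c * α * p) :
    -(c * x * p) ≤ rg2Rhs α c x p := by
  -- AM-GM: `√y ≤ (1 + y) / 2`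
  have hsqrt : √(1 + 2 * c * α * p) ≤ 1 + c * α * p := by
    nlinarith [Real.sq_sqrt hp, sq_nonneg (√(1 + 2 * c * α * p) - 1)]
  calc -(c * x * p) = x / α * (-(c * α * p)) := by field_simp
    _ ≤ rg2Rhs α c x p := mul_le_mul_of_nonneg_left (by linarith) (div_nonneg hx hα.le)

end Rhs

lemma ContinuousOn.exists_first_nonpos {f : ℝ → ℝ} {a b : ℝ} (hf : ContinuousOn f (Icc a b))
    (ha : 0 < f a) (hneg : ∃ t ∈ Icc a b, f t ≤ 0) :
    ∃ T ∈ Ioc a b, f T ≤ 0 ∧ ∀ t ∈ Ico a T, 0 < f t := by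
  set A := Icc a b ∩ f ⁻¹' Iic 0
  have hbdd : BddBelow A := ⟨a, fun t ht => ht.1.1⟩
  have hT : sInf A ∈ A :=
    (hf.preimage_isClosed_of_isClosed isClosed_Icc isClosed_Iic).csInf_mem hneg hbdd
  have hTa : a ≠ sInf A := by
    rintro h
    exact (hT.2.trans_lt (h ▸ ha)).false
  refine ⟨sInf A, ⟨hT.1.1.lt_of_ne hTa, hT.1.2⟩, hT.2, fun t ht => ?_⟩
  by_contra! hft
  exact (csInf_le hbdd ⟨⟨ht.1, ht.2.le.trans hT.1.2⟩, hft⟩).not_gt ht.2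

lemma monotoneOn_exp_mul_of_neg_mul_le_deriv {g g' : ℝ → ℝ} {a b K : ℝ}
    (hg : ContinuousOn g (Icc a b)) (hderiv : ∀ t ∈ Ioo a b, HasDerivAt g (g' t) t)
    (hbound : ∀ t ∈ Ioo a b, -(K * g t) ≤ g' t) :
    MonotoneOn (fun t => Real.exp (K * t) * g t) (Icc a b) := by
  have hexp (t : ℝ) : HasDerivAt (fun t => Real.exp (K * t)) (Real.exp (K * t) * K) t := by
    simpa using ((hasDerivAt_id t).const_mul K).exp
  refine monotoneOn_of_hasDerivWithinAt_nonneg (convex_Icc a b)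
    (f' := fun t => Real.exp (K * t) * K * g t + Real.exp (K * t) * g' t)
    ((Real.continuous_exp.comp (continuous_const_mul K)).continuousOn.mul hg)
    (fun t ht => ?_) (fun t ht => ?_)
  · rw [interior_Icc] at ht
    exact ((hexp t).mul (hderiv t ht)).hasDerivWithinAt
  · rw [interior_Icc] at ht
    have := hbound t ht
    have := Real.exp_pos (K * t)
    nlinarith

structure IsCigarProfileOn (α c b : ℝ) (φ φ' φ'' : ℝ → ℝ) : Prop where
  map_zero : φ 0 = 0
  deriv_zero : φ' 0 = 1
  continuousOn : ContinuousOn φ (Icc 0 b)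
  continuousOn_deriv : ContinuousOn φ' (Icc 0 b)
  hasDerivAt : ∀ t ∈ Ioo 0 b, HasDerivAt φ (φ' t) t
  hasDerivAt_deriv : ∀ t ∈ Ioo 0 b, HasDerivAt φ' (φ'' t) t
  ode : ∀ t ∈ Ioo 0 b, φ'' t = rg2Rhs α c (φ t) (φ' t)

namespace IsCigarProfileOn

variable {α c b : ℝ} {φ φ' φ'' : ℝ → ℝ}

lemma of_hasDerivWithinAt {s : Set ℝ} (h0 : φ 0 = 0) (h1 : φ' 0 = 1)
    (hd1 : ∀ t ∈ s, HasDerivWithinAt φ (φ' t) s t)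
    (hd2 : ∀ t ∈ s, HasDerivWithinAt φ' (φ'' t) s t)
    (hode : ∀ t ∈ s, φ'' t = rg2Rhs α c (φ t) (φ' t)) (hsub : Icc 0 b ⊆ s) :
    IsCigarProfileOn α c b φ φ' φ'' where
  map_zero := h0
  deriv_zero := h1
  continuousOn t ht := (hd1 t (hsub ht)).continuousWithinAt.mono hsub
  continuousOn_deriv t ht := (hd2 t (hsub ht)).continuousWithinAt.mono hsub
  hasDerivAt t ht :=
    (hd1 t (hsub (Ioo_subset_Icc_self ht))).hasDerivAt
      (Filter.mem_of_superset (Icc_mem_nhds ht.1 ht.2) hsub)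
  hasDerivAt_deriv t ht :=
    (hd2 t (hsub (Ioo_subset_Icc_self ht))).hasDerivAt
      (Filter.mem_of_superset (Icc_mem_nhds ht.1 ht.2) hsub)
  ode t ht := hode t (hsub (Ioo_subset_Icc_self ht))

lemma mono {b' : ℝ} (h : IsCigarProfileOn α c b φ φ' φ'') (hb : b' ≤ b) :
    IsCigarProfileOn α c b' φ φ' φ'' where
  map_zero := h.map_zero
  deriv_zero := h.deriv_zero
  continuousOn := h.continuousOn.mono (Icc_subset_Icc_right hb)
  continuousOn_deriv := h.continuousOn_deriv.mono (Icc_subset_Icc_right hb)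
  hasDerivAt t ht := h.hasDerivAt t ⟨ht.1, ht.2.trans_le hb⟩
  hasDerivAt_deriv t ht := h.hasDerivAt_deriv t ⟨ht.1, ht.2.trans_le hb⟩
  ode t ht := h.ode t ⟨ht.1, ht.2.trans_le hb⟩

lemma monotoneOn_of_deriv_nonneg (h : IsCigarProfileOn α c b φ φ' φ'')
    (hpos : ∀ t ∈ Ioo 0 b, 0 ≤ φ' t) : MonotoneOn φ (Icc 0 b) :=
  monotoneOn_of_hasDerivWithinAt_nonneg (convex_Icc 0 b) h.continuousOn
    (fun t ht => (h.hasDerivAt t (by rwa [interior_Icc] at ht)).hasDerivWithinAt)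
    (fun t ht => hpos t (by rwa [interior_Icc] at ht))

lemma deriv_pos (h : IsCigarProfileOn α c b φ φ' φ'') (hα : 0 < α) (hc : 0 ≤ c) :
    ∀ t ∈ Icc 0 b, 0 < φ' t := by
  by_contra! hneg
  obtain ⟨T, ⟨hT0, hTb⟩, hφ'T, hpos⟩ :=
    h.continuousOn_deriv.exists_first_nonpos (h.deriv_zero ▸ one_pos) hneg
  have hT := h.mono hTb
  have hmono := hT.monotoneOn_of_deriv_nonneg fun t ht => (hpos t ⟨ht.1.le, ht.2⟩).le
  have hφ_nonneg (t : ℝ) (ht : t ∈ Icc 0 T) : 0 ≤ φ t :=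
    h.map_zero ▸ hmono (left_mem_Icc.2 hT0.le) ht ht.1
  have hbound (t : ℝ) (ht : t ∈ Ioo 0 T) : -(c * φ T * φ' t) ≤ φ'' t := by
    have hφ't := hpos t ⟨ht.1.le, ht.2⟩
    have hφt : φ t ≤ φ T := hmono (Ioo_subset_Icc_self ht) (right_mem_Icc.2 hT0.le) ht.2.le
    calc -(c * φ T * φ' t) ≤ -(c * φ t * φ' t) := by gcongr
      _ ≤ φ'' t := hT.ode t ht ▸ neg_mul_le_rg2Rhs hα (hφ_nonneg t (Ioo_subset_Icc_self ht))
          (by positivity)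
  have hgrowth := monotoneOn_exp_mul_of_neg_mul_le_deriv hT.continuousOn_deriv
    hT.hasDerivAt_deriv hbound (left_mem_Icc.2 hT0.le) (right_mem_Icc.2 hT0.le) hT0.le
  simp only [mul_zero, Real.exp_zero, one_mul, h.deriv_zero] at hgrowth
  nlinarith [Real.exp_pos (c * φ T * T)]

lemma strictMonoOn (h : IsCigarProfileOn α c b φ φ' φ'') (hα : 0 < α) (hc : 0 ≤ c) :
    StrictMonoOn φ (Icc 0 b) :=
  strictMonoOn_of_hasDerivWithinAt_pos (convex_Icc 0 b) h.continuousOn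
    (fun t ht => (h.hasDerivAt t (by rwa [interior_Icc] at ht)).hasDerivWithinAt)
    (fun t ht => h.deriv_pos hα hc t (interior_subset ht))

lemma strictAntiOn_deriv (h : IsCigarProfileOn α c b φ φ' φ'') (hα : 0 < α) (hc : 0 < c) :
    StrictAntiOn φ' (Icc 0 b) := by
  refine strictAntiOn_of_hasDerivWithinAt_neg (convex_Icc 0 b) h.continuousOn_deriv
    (fun t ht => (h.hasDerivAt_deriv t (by rwa [interior_Icc] at ht)).hasDerivWithinAt)
    (fun t ht => ?_)
  rw [interior_Icc] at ht
  have hφt : 0 < φ t := h.map_zero ▸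
    h.strictMonoOn hα hc.le (left_mem_Icc.2 (ht.1.trans ht.2).le) (Ioo_subset_Icc_self ht) ht.1
  exact h.ode t ht ▸ rg2Rhs_neg hα hc hφt (h.deriv_pos hα hc.le t (Ioo_subset_Icc_self ht))

end IsCigarProfileOn

theorem rg2_cigar_profile_monotonicity_general
    (α c : ℝ) (hα : 0 < α) (hc : 0 < c) (S : EReal)
    (φ φ' φ'' : ℝ → ℝ)
    (h0 : φ 0 = 0) (h1 : φ' 0 = 1)
    (hd1 : ∀ s ∈ {s : ℝ | 0 ≤ s ∧ (s : EReal) < S},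
      HasDerivWithinAt φ (φ' s) {s : ℝ | 0 ≤ s ∧ (s : EReal) < S} s)
    (hd2 : ∀ s ∈ {s : ℝ | 0 ≤ s ∧ (s : EReal) < S},
      HasDerivWithinAt φ' (φ'' s) {s : ℝ | 0 ≤ s ∧ (s : EReal) < S} s)
    (hode : ∀ s ∈ {s : ℝ | 0 ≤ s ∧ (s : EReal) < S},
      φ'' s = φ s / α * (1 - Real.sqrt (1 + 2 * c * α * φ' s))) :
    (∀ s : ℝ, 0 < s → (s : EReal) < S → 0 < φ s ∧ 0 < φ' s ∧ φ' s ≤ 1) ∧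
    StrictAntiOn φ' {s : ℝ | 0 < s ∧ (s : EReal) < S} := by
  have hprofile (b : ℝ) (hb : (b : EReal) < S) : IsCigarProfileOn α c b φ φ' φ'' :=
    .of_hasDerivWithinAt h0 h1 hd1 hd2 hode fun t ht =>
      ⟨ht.1, (EReal.coe_le_coe_iff.2 ht.2).trans_lt hb⟩
  refine ⟨fun s hs hsS => ?_, fun x hx y hy hxy => ?_⟩
  · have h := hprofile s hsS
    have h0s : (0 : ℝ) ∈ Icc 0 s := left_mem_Icc.2 hs.le
    have hss : s ∈ Icc 0 s := right_mem_Icc.2 hs.le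
    exact ⟨h0 ▸ h.strictMonoOn hα hc.le h0s hss hs, h.deriv_pos hα hc.le s hss,
      h1 ▸ (h.strictAntiOn_deriv hα hc h0s hss hs).le⟩
  · exact (hprofile y hy.2).strictAntiOn_deriv hα hc ⟨hx.1.le, hxy.le⟩ ⟨hy.1.le, le_rfl⟩
      hxy

/-- Monotonicity and positivity for the RG-2 cigar soliton profile: a twice
continuously differentiable solution of `φ'' = (φ/α)(1 − √(1 + 2cα·φ'))` on
`[0, S)` (with `0 < S ≤ ∞`) satisfying `φ(0) = 0`, `φ'(0) = 1` has `φ > 0` and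
`0 < φ' ≤ 1` on `(0, S)`, and `φ'` is strictly decreasing there. -/
theorem rg2_cigar_profile_monotonicity
    (α c : ℝ) (hα : 0 < α) (hc : 0 < c) (S : EReal) (hS : 0 < S)
    (φ φ' φ'' : ℝ → ℝ)
    (h0 : φ 0 = 0) (h1 : φ' 0 = 1)
    (hd1 : ∀ s ∈ {s : ℝ | 0 ≤ s ∧ (s : EReal) < S},
      HasDerivWithinAt φ (φ' s) {s : ℝ | 0 ≤ s ∧ (s : EReal) < S} s)
    (hd2 : ∀ s ∈ {s : ℝ | 0 ≤ s ∧ (s : EReal) < S},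
      HasDerivWithinAt φ' (φ'' s) {s : ℝ | 0 ≤ s ∧ (s : EReal) < S} s)
    (hcont : ContinuousOn φ'' {s : ℝ | 0 ≤ s ∧ (s : EReal) < S})
    (hge : ∀ s ∈ {s : ℝ | 0 ≤ s ∧ (s : EReal) < S}, 0 ≤ 1 + 2 * c * α * φ' s)
    (hode : ∀ s ∈ {s : ℝ | 0 ≤ s ∧ (s : EReal) < S},
      φ'' s = φ s / α * (1 - Real.sqrt (1 + 2 * c * α * φ' s))) :
    (∀ s : ℝ, 0 < s → (s : EReal) < S → 0 < φ s ∧ 0 < φ' s ∧ φ' s ≤ 1) ∧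
    StrictAntiOn φ' {s : ℝ | 0 < s ∧ (s : EReal) < S} :=
  rg2_cigar_profile_monotonicity_general α c hα hc S φ φ' φ'' h0 h1 hd1 hd2 hode
end

section
/- Let α > 0 and c > 0 be real constants, and let φ : [0, ∞) → ℝ be twice continuously differentiable with φ(0) = 0, φ'(0) = 1, 1 + 2cα·φ'(s) ≥ 0 for all s, φ(s) > 0 and φ'(s) > 0 for all s > 0, and φ''(s) = (φ(s)/α)·(1 − √(1 + 2cα·φ'(s))) for all s ≥ 0. Then φ'(s) → 0 as s → ∞, and φ is bounded on [0, ∞). -/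
/-!
Since `φ, φ' ≥ 0`, the ODE gives `φ'' ≤ 0`, so `φ'` decreases from `φ'(0) = 1` and stays in
`[0, 1]`. On that range the chord of the concave function `y ↦ √(1 + 2cα y)` gives
`1 - √(1 + 2cα φ') ≤ -k φ'` with `k = 2cα / (1 + √(1 + 2cα))`, hence
`φ'' ≤ -(k/α) φ φ'`. Therefore the energy `φ' + (k/2α) φ²` is nonincreasing, so it stays
below its initial value `1`, which bounds `φ`. A nonincreasing nonnegative `φ'` with a positive
limit would make `φ` grow linearly, so `φ' → 0`.
-/

open Set Filter Topology Real

lemma one_sub_sqrt_one_add_mul_le {a x : ℝ} (ha : 0 ≤ a) (hx₀ : 0 ≤ x) (hx₁ : x ≤ 1) :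
    1 - √(1 + a * x) ≤ -(a / (1 + √(1 + a)) * x) := by
  have hax : 0 ≤ a * x := mul_nonneg ha hx₀
  have hA₁ : 1 ≤ √(1 + a * x) := one_le_sqrt.2 (by linarith)
  have hA_sq : √(1 + a * x) ^ 2 = 1 + a * x := sq_sqrt (by linarith)
  have hAB : √(1 + a * x) ≤ √(1 + a) := sqrt_le_sqrt (by nlinarith)
  have hB : 0 < 1 + √(1 + a) := by positivity
  have hchord : a * x / (1 + √(1 + a)) ≤ √(1 + a * x) - 1 := by
    rw [div_le_iff₀ hB]
    nlinarith [mul_nonneg (sub_nonneg.2 hA₁) (sub_nonneg.2 hAB)]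
  rw [div_mul_eq_mul_div]
  linarith

lemma div_mul_one_sub_sqrt_le {α c x y : ℝ} (hα : 0 < α) (hc : 0 ≤ c) (hx : 0 ≤ x)
    (hy₀ : 0 ≤ y) (hy₁ : y ≤ 1) :
    x / α * (1 - √(1 + 2 * c * α * y)) ≤
      -(2 * c * α / (1 + √(1 + 2 * c * α)) / α * x * y) :=
  calc x / α * (1 - √(1 + 2 * c * α * y))
      ≤ x / α * -(2 * c * α / (1 + √(1 + 2 * c * α)) * y) :=
        mul_le_mul_of_nonneg_left (one_sub_sqrt_one_add_mul_le (by positivity) hy₀ hy₁)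
          (div_nonneg hx hα.le)
    _ = -(2 * c * α / (1 + √(1 + 2 * c * α)) / α * x * y) := by ring

section Monotonicity

variable {D : Set ℝ} {f f' : ℝ → ℝ}

lemma monotoneOn_of_hasDerivWithinAt_nonneg' (hD : Convex ℝ D)
    (hf : ∀ x ∈ D, HasDerivWithinAt f (f' x) D x) (hf' : ∀ x ∈ interior D, 0 ≤ f' x) :
    MonotoneOn f D :=
  monotoneOn_of_hasDerivWithinAt_nonneg hD (fun x hx ↦ (hf x hx).continuousWithinAt)
    (fun x hx ↦ (hf x (interior_subset hx)).mono interior_subset) hf'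

lemma antitoneOn_of_hasDerivWithinAt_nonpos' (hD : Convex ℝ D)
    (hf : ∀ x ∈ D, HasDerivWithinAt f (f' x) D x) (hf' : ∀ x ∈ interior D, f' x ≤ 0) :
    AntitoneOn f D :=
  antitoneOn_of_hasDerivWithinAt_nonpos hD (fun x hx ↦ (hf x hx).continuousWithinAt)
    (fun x hx ↦ (hf x (interior_subset hx)).mono interior_subset) hf'

lemma antitoneOn_deriv_add_sq {f'' : ℝ → ℝ} {κ : ℝ} (hD : Convex ℝ D)
    (hf : ∀ x ∈ D, HasDerivWithinAt f (f' x) D x)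
    (hf' : ∀ x ∈ D, HasDerivWithinAt f' (f'' x) D x)
    (hf'' : ∀ x ∈ D, f'' x ≤ -(κ * f x * f' x)) :
    AntitoneOn (fun x ↦ f' x + κ / 2 * f x ^ 2) D :=
  antitoneOn_of_hasDerivWithinAt_nonpos' hD
    (fun x hx ↦ (hf' x hx).add (((hf x hx).pow 2).const_mul _)) fun x hx ↦ by
      have := hf'' x (interior_subset hx)
      simp only [Nat.cast_ofNat]
      linarith

end Monotonicity

section DerivAtTop

variable {f f' : ℝ → ℝ} {a M : ℝ}

lemma exists_deriv_lt_of_forall_le (hf : ∀ x ∈ Ici a, HasDerivWithinAt f (f' x) (Ici a) x)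
    (hM : ∀ x ∈ Ici a, f x ≤ M) {ε : ℝ} (hε : 0 < ε) : ∃ x ∈ Ici a, f' x < ε := by
  by_contra! hge
  have hmono : MonotoneOn (fun x ↦ f x - ε * x) (Ici a) :=
    monotoneOn_of_hasDerivWithinAt_nonneg' (convex_Ici a)
      (fun x hx ↦ (hf x hx).sub ((hasDerivWithinAt_id x _).const_mul ε)) fun x hx ↦ by
        simpa using hge x (interior_subset hx)
  set b := a + (M - f a + 1) / ε
  have hab : a ≤ b :=
    le_add_of_nonneg_right (div_nonneg (by linarith [hM a self_mem_Ici]) hε.le)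
  have hgrowth : f a - ε * a ≤ f b - ε * b := hmono self_mem_Ici hab hab
  have hεb : ε * b = ε * a + (M - f a + 1) := by
    simp only [b]; field_simp
  linarith [hM b hab]

lemma tendsto_deriv_atTop_zero_of_antitoneOn
    (hf : ∀ x ∈ Ici a, HasDerivWithinAt f (f' x) (Ici a) x) (hanti : AntitoneOn f' (Ici a))
    (hnonneg : ∀ x ∈ Ici a, 0 ≤ f' x) (hM : ∀ x ∈ Ici a, f x ≤ M) :
    Tendsto f' atTop (𝓝 0) := by
  refine tendsto_order.2 ⟨fun b hb ↦ ?_, fun ε hε ↦ ?_⟩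
  · filter_upwards [eventually_ge_atTop a] with x hx
    exact hb.trans_le (hnonneg x hx)
  · obtain ⟨x₀, hx₀, hlt⟩ := exists_deriv_lt_of_forall_le hf hM hε
    filter_upwards [eventually_ge_atTop x₀] with x hx
    exact (hanti hx₀ (hx₀.trans hx) hx).trans_lt hlt

end DerivAtTop

theorem rg2_cigar_profile_asymptotics_general
    (α c : ℝ) (hα : 0 < α) (hc : 0 < c)
    (φ φ' φ'' : ℝ → ℝ)
    (h0 : φ 0 = 0) (h1 : φ' 0 = 1)
    (hd1 : ∀ s ∈ Set.Ici (0 : ℝ), HasDerivWithinAt φ (φ' s) (Set.Ici 0) s)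
    (hd2 : ∀ s ∈ Set.Ici (0 : ℝ), HasDerivWithinAt φ' (φ'' s) (Set.Ici 0) s)
    (hφpos : ∀ s : ℝ, 0 < s → 0 < φ s)
    (hφ'pos : ∀ s : ℝ, 0 < s → 0 < φ' s)
    (hode : ∀ s ∈ Set.Ici (0 : ℝ),
      φ'' s = φ s / α * (1 - Real.sqrt (1 + 2 * c * α * φ' s))) :
    Filter.Tendsto φ' Filter.atTop (nhds 0) ∧
    ∃ M : ℝ, ∀ s ∈ Set.Ici (0 : ℝ), |φ s| ≤ M := by
  have hφ_nonneg : ∀ s ∈ Ici (0 : ℝ), 0 ≤ φ s := fun s hs ↦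
    (eq_or_lt_of_le hs).elim (fun h ↦ by rw [← h, h0]) fun h ↦ (hφpos s h).le
  have hφ'_nonneg : ∀ s ∈ Ici (0 : ℝ), 0 ≤ φ' s := fun s hs ↦
    (eq_or_lt_of_le hs).elim (fun h ↦ by rw [← h, h1]; exact zero_le_one)
      fun h ↦ (hφ'pos s h).le
  have hφ'_anti : AntitoneOn φ' (Ici 0) :=
    antitoneOn_of_hasDerivWithinAt_nonpos' (convex_Ici 0) hd2 fun s hs ↦ by
      have hs : s ∈ Ici (0 : ℝ) := interior_subset hs
      rw [hode s hs]
      have := hφ'_nonneg s hs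
      exact mul_nonpos_of_nonneg_of_nonpos (div_nonneg (hφ_nonneg s hs) hα.le)
        (sub_nonpos.2 (one_le_sqrt.2 (le_add_of_nonneg_right (by positivity))))
  set κ := 2 * c * α / (1 + √(1 + 2 * c * α)) / α
  have hκ : 0 < κ := by positivity
  have henergy := antitoneOn_deriv_add_sq (κ := κ) (convex_Ici 0) hd1 hd2 fun s hs ↦
    hode s hs ▸ div_mul_one_sub_sqrt_le hα hc.le (hφ_nonneg s hs) (hφ'_nonneg s hs)
      (h1 ▸ hφ'_anti self_mem_Ici hs hs)
  have hbdd : ∀ s ∈ Ici (0 : ℝ), |φ s| ≤ √(2 / κ) := fun s hs ↦ by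
    have := henergy self_mem_Ici hs hs
    simp only [h0, h1] at this
    refine abs_le_sqrt ((le_div_iff₀ hκ).2 ?_)
    nlinarith [hφ'_nonneg s hs]
  exact ⟨tendsto_deriv_atTop_zero_of_antitoneOn hd1 hφ'_anti hφ'_nonneg
    fun s hs ↦ (le_abs_self _).trans (hbdd s hs), _, hbdd⟩

/-- Asymptotics of the RG-2 cigar soliton profile: for a global solution of
`φ'' = (φ/α)(1 − √(1 + 2cα·φ'))` on `[0, ∞)` with `φ(0) = 0`, `φ'(0) = 1`,
`φ > 0` and `φ' > 0` on `(0, ∞)`, the derivative `φ'` tends to `0` at infinity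
and `φ` is bounded. -/
theorem rg2_cigar_profile_asymptotics
    (α c : ℝ) (hα : 0 < α) (hc : 0 < c)
    (φ φ' φ'' : ℝ → ℝ)
    (h0 : φ 0 = 0) (h1 : φ' 0 = 1)
    (hd1 : ∀ s ∈ Set.Ici (0 : ℝ), HasDerivWithinAt φ (φ' s) (Set.Ici 0) s)
    (hd2 : ∀ s ∈ Set.Ici (0 : ℝ), HasDerivWithinAt φ' (φ'' s) (Set.Ici 0) s)
    (hcont : ContinuousOn φ'' (Set.Ici 0))
    (hge : ∀ s ∈ Set.Ici (0 : ℝ), 0 ≤ 1 + 2 * c * α * φ' s)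
    (hφpos : ∀ s : ℝ, 0 < s → 0 < φ s)
    (hφ'pos : ∀ s : ℝ, 0 < s → 0 < φ' s)
    (hode : ∀ s ∈ Set.Ici (0 : ℝ),
      φ'' s = φ s / α * (1 - Real.sqrt (1 + 2 * c * α * φ' s))) :
    Filter.Tendsto φ' Filter.atTop (nhds 0) ∧
    ∃ M : ℝ, ∀ s ∈ Set.Ici (0 : ℝ), |φ s| ≤ M :=
  rg2_cigar_profile_asymptotics_general α c hα hc φ φ' φ'' h0 h1 hd1 hd2 hφpos hφ'pos hode
end
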